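/- Let ℓ ≥ 3 and set Ω'_ℓ := Σ_{i=2}^{ℓ} e_{ε₁−ε_i} e_{ε₁+ε_i} ∈ U(so(2ℓ,ℂ)) (the factors appearing here pairwise commute). For every n ≥ 1: (a) [E, (Ω'_ℓ)ⁿ] = 0 for every simple positive root vector E of so(2ℓ,ℂ) (i.e. for E = e_{ε_k−ε_{k+1}}, 1 ≤ k ≤ ℓ−1, and E = e_{ε_{ℓ−1}+ε_ℓ}); and (b) [H(a), (Ω'_ℓ)ⁿ] = 2n·a₁·(Ω'_ℓ)ⁿ for every a ∈ ℂ^ℓ. Thus (Ω'_ℓ)ⁿ is a highest weight vector of weight 2nε₁ = nθ (θ the highest root) for the adjoint action of so(2ℓ,ℂ) on its universal enveloping algebra. (This is the finite-dimensional Lie-algebraic content of the statement that v_n = (Σ_{i=2}^{ℓ} e_{ε₁−ε_i}(−1)e_{ε₁+ε_i}(−1))ⁿ·1 is a singular vector in V^{n−ℓ+1}(D_ℓ).) -/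

import Mathlib

open Matrix

attribute [local instance 100] LieRing.ofAssociativeRing

noncomputable section

/-- The symmetric `2n × 2n` matrix `G` with `G_{i, n+i} = G_{n+i, i} = 1` (`1 ≤ i ≤ n`) and all
other entries zero (written here with 0-indexed indices `0, …, 2n-1`). -/
def Gmat (n : ℕ) : Matrix (Fin (2*n)) (Fin (2*n)) ℂ :=
  Matrix.of fun i j => if (i : ℕ) + n = (j : ℕ) ∨ (j : ℕ) + n = (i : ℕ) then 1 else 0

/-- The split orthogonal Lie algebra `so(2n, ℂ)`: the Lie algebra of `2n × 2n` complex
matrices `X` with `Xᵀ G + G X = 0`, i.e. the skew-adjoint matrices for the form `Gmat n`. -/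
def so (n : ℕ) : LieSubalgebra ℂ (Matrix (Fin (2*n)) (Fin (2*n)) ℂ) :=
  skewAdjointMatricesLieSubalgebra (Gmat n)

/-- The inclusion `{0, …, n-1} ⊆ {0, …, 2n-1}` of indices. -/
def lo {n : ℕ} (i : Fin n) : Fin (2*n) := ⟨(i : ℕ), by have := i.isLt; omega⟩

/-- The index `n + i ∈ {n, …, 2n-1}`. -/
def hi {n : ℕ} (i : Fin n) : Fin (2*n) := ⟨n + (i : ℕ), by have := i.isLt; omega⟩

/-- The matrix `e_{ε_i − ε_j} = E_{i,j} − E_{n+j, n+i}`. -/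
def eM {n : ℕ} (i j : Fin n) : Matrix (Fin (2*n)) (Fin (2*n)) ℂ :=
  Matrix.single (lo i) (lo j) 1 - Matrix.single (hi j) (hi i) 1

/-- The matrix `e_{ε_i + ε_j} = E_{i,n+j} − E_{j, n+i}`. -/
def eP {n : ℕ} (i j : Fin n) : Matrix (Fin (2*n)) (Fin (2*n)) ℂ :=
  Matrix.single (lo i) (hi j) 1 - Matrix.single (lo j) (hi i) 1

/-- The "swap" `b ↦ b ± n` on indices, so that `Gmat n k b = δ_{k, Gsw b}`. -/
def Gsw {n : ℕ} (b : Fin (2*n)) : Fin (2*n) :=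
  ⟨if (b:ℕ) < n then (b:ℕ) + n else (b:ℕ) - n, by have := b.isLt; split <;> omega⟩

lemma Gmat_apply {n : ℕ} (k b : Fin (2*n)) :
    Gmat n k b = if k = Gsw b then 1 else 0 := by
  have hk := k.isLt; have hb := b.isLt
  have h : ((k:ℕ) + n = (b:ℕ) ∨ (b:ℕ) + n = (k:ℕ)) ↔ (k = Gsw b) := by
    rw [Fin.ext_iff]
    show _ ↔ (k:ℕ) = if (b:ℕ) < n then (b:ℕ) + n else (b:ℕ) - n
    split <;> omega
  simp only [Gmat, Matrix.of_apply]
  rw [if_congr h rfl rfl]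

lemma mul_Gmat_apply {n : ℕ} (M : Matrix (Fin (2*n)) (Fin (2*n)) ℂ) (a b : Fin (2*n)) :
    (M * Gmat n) a b = M a (Gsw b) := by
  rw [Matrix.mul_apply]
  rw [Finset.sum_congr rfl fun k _ => by rw [Gmat_apply]]
  simp

lemma Gmat_mul_apply {n : ℕ} (M : Matrix (Fin (2*n)) (Fin (2*n)) ℂ) (a b : Fin (2*n)) :
    (Gmat n * M) a b = M (Gsw a) b := by
  rw [Matrix.mul_apply]
  have h' : ∀ k : Fin (2*n), Gmat n a k = if k = Gsw a then 1 else 0 := by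
    intro k
    have hk := k.isLt; have ha := a.isLt
    have h : ((a:ℕ) + n = (k:ℕ) ∨ (k:ℕ) + n = (a:ℕ)) ↔ (k = Gsw a) := by
      rw [Fin.ext_iff]
      show _ ↔ (k:ℕ) = if (a:ℕ) < n then (a:ℕ) + n else (a:ℕ) - n
      split <;> omega
    simp only [Gmat, Matrix.of_apply]
    rw [if_congr h rfl rfl]
  rw [Finset.sum_congr rfl fun k _ => by rw [h' k]]
  simp

theorem eM_mem {n : ℕ} (i j : Fin n) : eM i j ∈ so n := by
  rw [so, mem_skewAdjointMatricesLieSubalgebra, mem_skewAdjointMatricesSubmodule]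
  show (eM i j)ᵀ * Gmat n = Gmat n * (-(eM i j))
  ext a b
  rw [mul_Gmat_apply, Gmat_mul_apply]
  have hi' := i.isLt; have hj' := j.isLt
  have ha := a.isLt; have hb := b.isLt
  simp only [eM, Matrix.transpose_apply, Matrix.neg_apply, Matrix.sub_apply,
    Matrix.single, Matrix.of_apply, lo, hi, Gsw, Fin.ext_iff]
  split_ifs <;> first | omega | norm_num

theorem eP_mem {n : ℕ} (i j : Fin n) : eP i j ∈ so n := by
  rw [so, mem_skewAdjointMatricesLieSubalgebra, mem_skewAdjointMatricesSubmodule]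
  show (eP i j)ᵀ * Gmat n = Gmat n * (-(eP i j))
  ext a b
  rw [mul_Gmat_apply, Gmat_mul_apply]
  have hi' := i.isLt; have hj' := j.isLt
  have ha := a.isLt; have hb := b.isLt
  simp only [eP, Matrix.transpose_apply, Matrix.neg_apply, Matrix.sub_apply,
    Matrix.single, Matrix.of_apply, lo, hi, Gsw, Fin.ext_iff]
  split_ifs <;> first | omega | norm_num

/-- `e_{ε_i − ε_j}` as an element of `so(2n, ℂ)`. -/
def eMinus {n : ℕ} (i j : Fin n) : so n := ⟨eM i j, eM_mem i j⟩

/-- `e_{ε_i + ε_j}` as an element of `so(2n, ℂ)`. -/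
def ePlus {n : ℕ} (i j : Fin n) : so n := ⟨eP i j, eP_mem i j⟩

/-- The Cartan element `H(a) = Σ_i a_i (E_{i,i} − E_{n+i,n+i})` as a matrix. -/
def Hmat {n : ℕ} (a : Fin n → ℂ) : Matrix (Fin (2*n)) (Fin (2*n)) ℂ :=
  ∑ i, a i • (Matrix.single (lo i) (lo i) 1 - Matrix.single (hi i) (hi i) 1)

theorem Hmat_mem {n : ℕ} (a : Fin n → ℂ) : Hmat a ∈ so n := by
  rw [so, mem_skewAdjointMatricesLieSubalgebra, mem_skewAdjointMatricesSubmodule]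
  show (Hmat a)ᵀ * Gmat n = Gmat n * (-(Hmat a))
  ext x y
  rw [mul_Gmat_apply, Gmat_mul_apply]
  have hx := x.isLt; have hy := y.isLt
  simp only [Hmat, Matrix.transpose_apply, Matrix.neg_apply, Matrix.sum_apply,
    Matrix.smul_apply, Matrix.sub_apply, Matrix.single, Matrix.of_apply,
    smul_eq_mul, neg_eq_iff_eq_neg, ← Finset.sum_neg_distrib]
  apply Finset.sum_congr rfl
  intro i _
  have hi' := i.isLt
  simp only [lo, hi, Gsw, Fin.ext_iff]
  split_ifs <;> first | omega | ring

/-- `H(a)` as an element of `so(2n, ℂ)` (the general element of the diagonal Cartan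
subalgebra). -/
def Hcar {n : ℕ} (a : Fin n → ℂ) : so n := ⟨Hmat a, Hmat_mem a⟩

/-- The universal enveloping algebra `U(so(2n, ℂ))`. -/
abbrev Uso (n : ℕ) : Type := UniversalEnvelopingAlgebra ℂ (so n)

/-- The canonical embedding `so(2n, ℂ) → U(so(2n, ℂ))`. -/
def uι {n : ℕ} (x : so n) : Uso n := UniversalEnvelopingAlgebra.ι ℂ x

/-- The element `Ω'_ℓ = Σ_{i=2}^{ℓ} e_{ε₁−ε_i} e_{ε₁+ε_i}` of `U(so(2ℓ, ℂ))`
(0-indexed: `Σ_{0 < i ≤ ℓ-1} e_{ε₀−ε_i} e_{ε₀+ε_i}`). -/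
def Omega' (l : ℕ) (hl : 0 < l) : Uso l :=
  ∑ i ∈ Finset.univ.filter fun i : Fin l => 0 < (i : ℕ),
    uι (eMinus ⟨0, hl⟩ i) * uι (ePlus ⟨0, hl⟩ i)

/-! The `i = 1` summand of `Ω'` (index `0` in the code) vanishes since `e_{2ε₁} = 0`, so `Ω'` is
a sum over all `i`. As `ad x` acts on `U(so(2ℓ, ℂ))` by derivations, `⁅x, Ω'⁆` only involves the
brackets of `x` with `e_{ε₁ ± ε_i}`. For `x = e_{ε_j − ε_k}` with `k ≠ 1` the two surviving terms
cancel; for `x = e_{ε_p + ε_q}` what remains is the commutator of `e_{ε₁ + ε_p}` and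
`e_{ε₁ + ε_q}`, which is `0`; and `H(a)` scales every summand by
`(ε₁ − ε_i + ε₁ + ε_i)(H(a)) = 2a₁`. Passing to `Ω'ⁿ`, commuting elements stay commuting and the
eigenvalue of `ad H(a)` is multiplied by `n`. -/

theorem Ring.lie_mul {R : Type*} [Ring R] (x a b : R) : ⁅x, a * b⁆ = ⁅x, a⁆ * b + a * ⁅x, b⁆ := by
  simp only [Ring.lie_def, sub_mul, mul_sub, mul_assoc]
  abel

theorem lie_pow_of_lie_eq_smul {R K : Type*} [Ring R] [CommRing K] [Algebra K R] {x A : R} {c : K}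
    (h : ⁅x, A⁆ = c • A) (n : ℕ) : ⁅x, A ^ n⁆ = (n * c) • A ^ n := by
  induction n with
  | zero => simp [Ring.lie_def]
  | succ n ih =>
    rw [pow_succ, Ring.lie_mul, ih, h, smul_mul_assoc, mul_smul_comm, ← add_smul]
    congr 1
    push_cast
    ring

theorem Matrix.single_mul_single {l m n α : Type*} [Fintype m] [DecidableEq l] [DecidableEq m]
    [DecidableEq n] [Semiring α] (i : l) (j k : m) (p : n) (c d : α) :
    single i j c * single k p d = if j = k then single i p (c * d) else 0 := by
  split_ifs with h
  · rw [h, single_mul_single_same]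
  · exact single_mul_single_of_ne (h := h) ..

section RootVectors

variable {m : ℕ}

@[simp] theorem lo_inj {i j : Fin m} : lo i = lo j ↔ i = j := by
  simp [lo, Fin.ext_iff]

@[simp] theorem hi_inj {i j : Fin m} : hi i = hi j ↔ i = j := by
  simp [hi, Fin.ext_iff]

@[simp] theorem lo_ne_hi (i j : Fin m) : lo i ≠ hi j := by
  simp only [lo, hi, ne_eq, Fin.ext_iff]
  omega

@[simp] theorem hi_ne_lo (i j : Fin m) : hi i ≠ lo j :=
  (lo_ne_hi j i).symm

theorem ePlus_swap (i j : Fin m) : ePlus j i = -ePlus i j :=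
  Subtype.ext (neg_sub _ _).symm

theorem ePlus_self (i : Fin m) : ePlus i i = 0 :=
  Subtype.ext (sub_self _)

theorem lie_eMinus_eMinus (i j k p : Fin m) :
    ⁅eMinus i j, eMinus k p⁆ =
      (if j = k then eMinus i p else 0) - (if p = i then eMinus k j else 0) := by
  apply Subtype.ext
  simp only [eMinus, eM, LieSubalgebra.coe_bracket, Ring.lie_def, sub_mul, mul_sub,
    Matrix.single_mul_single, lo_inj, hi_inj, lo_ne_hi, hi_ne_lo, if_false, mul_one]
  split_ifs <;> simp_all
  abel

theorem lie_eMinus_ePlus (i j k p : Fin m) :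
    ⁅eMinus i j, ePlus k p⁆ =
      (if j = k then ePlus i p else 0) + (if j = p then ePlus k i else 0) := by
  apply Subtype.ext
  simp only [eMinus, ePlus, eM, eP, LieSubalgebra.coe_bracket, Ring.lie_def, sub_mul, mul_sub,
    Matrix.single_mul_single, lo_inj, hi_inj, hi_ne_lo, if_false, mul_one]
  split_ifs <;> subst_vars <;> simp_all
  all_goals abel

theorem lie_ePlus_eMinus (i j k p : Fin m) :
    ⁅ePlus i j, eMinus k p⁆ =
      (if p = j then ePlus k i else 0) - (if p = i then ePlus k j else 0) := by
  rw [← lie_skew, lie_eMinus_ePlus, ePlus_swap k i]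
  split_ifs <;> abel

theorem lie_ePlus_ePlus (i j k p : Fin m) : ⁅ePlus i j, ePlus k p⁆ = 0 := by
  apply Subtype.ext
  simp only [ePlus, eP, LieSubalgebra.coe_bracket, Ring.lie_def, sub_mul, mul_sub,
    Matrix.single_mul_single, hi_ne_lo, if_false, sub_self]
  rfl

theorem Hcar_eq_sum (a : Fin m → ℂ) : Hcar a = ∑ i, a i • eMinus i i := by
  apply Subtype.ext
  rw [AddSubmonoidClass.coe_finsetSum]
  rfl

theorem lie_Hcar_eMinus (a : Fin m → ℂ) (i j : Fin m) :
    ⁅Hcar a, eMinus i j⁆ = (a i - a j) • eMinus i j := by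
  simp only [Hcar_eq_sum, sum_lie, smul_lie, lie_eMinus_eMinus, smul_sub, smul_ite, smul_zero,
    Finset.sum_sub_distrib, Finset.sum_ite_eq', Finset.sum_ite_eq, Finset.mem_univ, if_true,
    sub_smul]

theorem lie_Hcar_ePlus (a : Fin m → ℂ) (i j : Fin m) :
    ⁅Hcar a, ePlus i j⁆ = (a i + a j) • ePlus i j := by
  simp only [Hcar_eq_sum, sum_lie, smul_lie, lie_eMinus_ePlus, smul_add, smul_ite, smul_zero,
    Finset.sum_add_distrib, Finset.sum_ite_eq', Finset.mem_univ, if_true, add_smul]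

end RootVectors

section Envelope

open Finset

variable {l : ℕ}

theorem uι_lie (x y : so l) : uι ⁅x, y⁆ = ⁅uι x, uι y⁆ :=
  LieHom.map_lie _ x y

theorem uι_zero : uι (0 : so l) = 0 :=
  map_zero _

theorem uι_neg (x : so l) : uι (-x) = -uι x :=
  map_neg _ x

theorem uι_sub (x y : so l) : uι (x - y) = uι x - uι y :=
  map_sub _ x y

theorem uι_smul (c : ℂ) (x : so l) : uι (c • x) = c • uι x :=
  map_smul _ c x

theorem Omega'_eq_sum_univ (hl : 0 < l) :
    Omega' l hl = ∑ i, uι (eMinus ⟨0, hl⟩ i) * uι (ePlus ⟨0, hl⟩ i) := by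
  refine sum_filter_of_ne fun i _ hi => Nat.pos_of_ne_zero fun h0 => hi ?_
  obtain rfl : i = ⟨0, hl⟩ := Fin.ext h0
  rw [ePlus_self, uι_zero, mul_zero]

theorem lie_uι_Omega' (hl : 0 < l) (x : so l) :
    ⁅uι x, Omega' l hl⁆ = ∑ i,
      (uι ⁅x, eMinus ⟨0, hl⟩ i⁆ * uι (ePlus ⟨0, hl⟩ i)
        + uι (eMinus ⟨0, hl⟩ i) * uι ⁅x, ePlus ⟨0, hl⟩ i⁆) := by
  simp only [Omega'_eq_sum_univ, lie_sum, Ring.lie_mul, uι_lie]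

theorem lie_uι_eMinus_Omega' (hl : 0 < l) (j k : Fin l) (hk : 0 < (k : ℕ)) :
    ⁅uι (eMinus j k), Omega' l hl⁆ = 0 := by
  have hk₀ : k ≠ ⟨0, hl⟩ := by rintro rfl; exact hk.ne rfl
  rw [lie_uι_Omega']
  simp only [lie_eMinus_eMinus, lie_eMinus_ePlus, hk₀, if_false, zero_sub, zero_add, uι_neg,
    apply_ite uι, uι_zero, ite_mul, mul_ite, zero_mul, mul_zero, neg_mul, sum_add_distrib,
    sum_neg_distrib, sum_ite_eq, sum_ite_eq', mem_univ, if_true, neg_add_cancel]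

theorem lie_uι_ePlus_Omega' (hl : 0 < l) (p q : Fin l) :
    ⁅uι (ePlus p q), Omega' l hl⁆ = 0 := by
  rw [lie_uι_Omega']
  simp only [lie_ePlus_eMinus, lie_ePlus_ePlus, uι_sub, uι_zero, mul_zero, add_zero,
    apply_ite uι, ite_mul, zero_mul, sub_mul, sum_sub_distrib, sum_ite_eq', mem_univ, if_true]
  rw [← Ring.lie_def, ← uι_lie, lie_ePlus_ePlus, uι_zero]

theorem lie_uι_Hcar_Omega' (hl : 0 < l) (a : Fin l → ℂ) :
    ⁅uι (Hcar a), Omega' l hl⁆ = (2 * a ⟨0, hl⟩) • Omega' l hl := by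
  rw [lie_uι_Omega', Omega'_eq_sum_univ, smul_sum]
  refine sum_congr rfl fun i _ => ?_
  rw [lie_Hcar_eMinus, lie_Hcar_ePlus, uι_smul, uι_smul, smul_mul_assoc, mul_smul_comm,
    ← add_smul]
  congr 1
  ring

end Envelope

/-- Let `ℓ ≥ 3` and `Ω'_ℓ = Σ_{i=2}^{ℓ} e_{ε₁−ε_i} e_{ε₁+ε_i} ∈ U(so(2ℓ, ℂ))`.
For every `n ≥ 1`: (a) `[E, (Ω'_ℓ)ⁿ] = 0` for every simple positive root vector `E` of
`so(2ℓ, ℂ)` (i.e. `E = e_{ε_k − ε_{k+1}}`, `1 ≤ k ≤ ℓ−1`, and `E = e_{ε_{ℓ−1} + ε_ℓ}`); and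
(b) `[H(a), (Ω'_ℓ)ⁿ] = 2n a₁ (Ω'_ℓ)ⁿ` for every `a ∈ ℂ^ℓ`; i.e. `(Ω'_ℓ)ⁿ` is a highest weight
vector of weight `2nε₁ = nθ` for the adjoint action of `so(2ℓ, ℂ)` on `U(so(2ℓ, ℂ))`. -/
theorem omega_prime_pow_highest_weight_vector (l : ℕ) (hl : 3 ≤ l) (n : ℕ) :
    (∀ (k : ℕ) (hk : k + 1 < l),
      uι (eMinus (⟨k, by omega⟩ : Fin l) ⟨k+1, hk⟩) * (Omega' l (by omega)) ^ n
        - (Omega' l (by omega)) ^ n * uι (eMinus (⟨k, by omega⟩ : Fin l) ⟨k+1, hk⟩) = 0) ∧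
    (uι (ePlus (⟨l-2, by omega⟩ : Fin l) ⟨l-1, by omega⟩) * (Omega' l (by omega)) ^ n
        - (Omega' l (by omega)) ^ n
            * uι (ePlus (⟨l-2, by omega⟩ : Fin l) ⟨l-1, by omega⟩) = 0) ∧
    (∀ a : Fin l → ℂ,
      uι (Hcar a) * (Omega' l (by omega)) ^ n - (Omega' l (by omega)) ^ n * uι (Hcar a)
        = (2 * (n : ℂ) * a ⟨0, by omega⟩) • (Omega' l (by omega)) ^ n) := by
  have hl₀ : 0 < l := by omega
  refine ⟨fun k hk => ?_, ?_, fun a => ?_⟩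
  · exact ((commute_iff_lie_eq.2 (lie_uι_eMinus_Omega' hl₀ _ _ k.succ_pos)).pow_right n).lie_eq
  · exact ((commute_iff_lie_eq.2 (lie_uι_ePlus_Omega' hl₀ _ _)).pow_right n).lie_eq
  · rw [show 2 * (n : ℂ) * a ⟨0, hl₀⟩ = n * (2 * a ⟨0, hl₀⟩) by ring]
    exact lie_pow_of_lie_eq_smul (lie_uι_Hcar_Omega' hl₀ a) n
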